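/- arXiv:2003.01523 — 3 statements merged into one kernel-verified Lean document; each statement's English description precedes it below -/
import Mathlib

section
/- The scale function of the CEV volatility process diverges to −∞ at the origin: for γ ∈ (1/2,1), κ, μ, θ > 0, the function p(x) = ∫₁ˣ exp{ −2 ∫₁ʸ κ(μ−z)/(θ² z^{2γ}) dz } dy satisfies lim_{x→0⁺} p(x) = −∞. -/
open Real MeasureTheory intervalIntegral Filter

theorem stmt_3 (γ κ μ θ : ℝ) (hγ : 1/2 < γ) (hγ1 : γ < 1)
    (hκ : 0 < κ) (hμ : 0 < μ) (hθ : 0 < θ) :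
    Tendsto (fun x : ℝ =>
        ∫ y in (1:ℝ)..x, Real.exp (-2 * ∫ z in (1:ℝ)..y, κ*(μ-z)/(θ^2 * z ^ (2*γ))))
      (nhdsWithin 0 (Set.Ioi 0)) atBot := by
  set A : ℝ := κ * μ / θ ^ 2 with hA
  set B : ℝ := κ / θ ^ 2 with hB
  set p : ℝ := 1 - 2*γ with hp
  set q : ℝ := 2 - 2*γ with hq
  have hθ2 : (0:ℝ) < θ ^ 2 := by positivity
  have hApos : 0 < A := by positivity
  have hBpos : 0 < B := by positivity
  have hpneg : p < 0 := by rw [hp]; linarith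
  have hqpos : 0 < q := by rw [hq]; linarith
  -- explicit formula for the inner integral
  have hI : ∀ y : ℝ, 0 < y →
      (∫ z in (1:ℝ)..y, κ*(μ-z)/(θ^2 * z ^ (2*γ)))
        = A * ((y ^ p - 1)/p) - B * ((y ^ q - 1)/q) := by
    intro y hy
    have h0 : (0:ℝ) ∉ Set.uIcc 1 y := by
      rw [Set.mem_uIcc]; push_neg; constructor <;> intro h <;> linarith
    have heq : Set.EqOn (fun z : ℝ => κ*(μ-z)/(θ^2 * z ^ (2*γ)))
        (fun z : ℝ => A * z ^ (-(2*γ)) - B * z ^ (1-2*γ)) (Set.uIcc 1 y) := by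
      intro z hz
      have hz0 : 0 < z := by
        rcases Set.mem_uIcc.mp hz with ⟨h1, _⟩ | ⟨h1, _⟩ <;> [linarith; linarith]
      have hz2 : (0:ℝ) < z ^ (2*γ) := rpow_pos_of_pos hz0 _
      have h1 : z ^ (1-2*γ) = z * (z ^ (2*γ))⁻¹ := by
        rw [show (1-2*γ) = 1 + -(2*γ) by ring, rpow_add hz0, rpow_one, rpow_neg hz0.le]
      simp only
      rw [h1, rpow_neg hz0.le, hA, hB]
      field_simp
    rw [integral_congr heq, integral_sub
        ((intervalIntegrable_rpow (Or.inr h0)).const_mul A)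
        ((intervalIntegrable_rpow (Or.inr h0)).const_mul B),
      intervalIntegral.integral_const_mul, intervalIntegral.integral_const_mul,
      integral_rpow (Or.inr ⟨by intro h; linarith, h0⟩),
      integral_rpow (Or.inl (by linarith))]
    rw [show -(2*γ) + 1 = p by rw [hp]; ring, show (1 - 2*γ) + 1 = q by rw [hq]; ring,
      Real.one_rpow, Real.one_rpow]
  -- the explicit exponent
  set G : ℝ → ℝ := fun y => -2 * (A * ((y ^ p - 1)/p) - B * ((y ^ q - 1)/q)) with hG
  set C₁ : ℝ := -2*A/p with hC₁
  have hC₁pos : 0 < C₁ := div_pos_of_neg_of_neg (by linarith) hpneg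
  have hpne : p ≠ 0 := ne_of_lt hpneg
  have hqne : q ≠ 0 := ne_of_gt hqpos
  -- key limit: log y + G y → ∞ as y → 0⁺
  have key : Tendsto (fun t : ℝ => C₁ * t ^ (2*γ-1) - log t) atTop atTop := by
    have ho := (isLittleO_log_rpow_atTop (r := 2*γ-1) (by linarith)).def (half_pos hC₁pos)
    apply tendsto_atTop_mono' _ _ ((tendsto_rpow_atTop (y := 2*γ-1)
      (by linarith)).const_mul_atTop (half_pos hC₁pos))
    filter_upwards [ho, eventually_ge_atTop (1:ℝ)] with t h1 h2
    rw [Real.norm_eq_abs, Real.norm_eq_abs, abs_of_nonneg (rpow_nonneg (by linarith) _)] at h1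
    have h3 := le_abs_self (log t)
    linarith
  have hlim1 : Tendsto (fun y : ℝ => log y + C₁ * y ^ p) (nhdsWithin 0 (Set.Ioi 0)) atTop := by
    have comp := key.comp tendsto_inv_nhdsGT_zero
    apply comp.congr'
    filter_upwards [self_mem_nhdsWithin] with y (hy : 0 < y)
    simp only [Function.comp]
    rw [Real.log_inv, inv_rpow hy.le, ← rpow_neg hy.le, show -(2*γ-1) = p by rw [hp]; ring]
    ring
  have hlim2' : Tendsto (fun y : ℝ => (2*B/q) * y ^ q + (2*A/p - 2*B/q))
      (nhdsWithin 0 (Set.Ioi 0)) (nhds ((2*B/q) * 0 + (2*A/p - 2*B/q))) := by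
    apply Tendsto.add_const
    apply Tendsto.const_mul
    have hcont : ContinuousAt (fun y : ℝ => y ^ q) 0 :=
      continuousAt_rpow_const _ _ (Or.inr hqpos.le)
    have h5 : Tendsto (fun y : ℝ => y ^ q) (nhdsWithin 0 (Set.Ioi 0)) (nhds ((0:ℝ) ^ q)) :=
      hcont.tendsto.mono_left nhdsWithin_le_nhds
    rwa [Real.zero_rpow hqpos.ne'] at h5
  have htend : Tendsto (fun y : ℝ => log y + G y) (nhdsWithin 0 (Set.Ioi 0)) atTop := by
    have := hlim1.atTop_add hlim2'
    apply this.congr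
    intro y
    rw [hG, hC₁]
    field_simp
    ring
  -- eventually 1 ≤ y * exp (G y)
  have hev : ∀ᶠ y in nhdsWithin 0 (Set.Ioi 0), 1 ≤ y * Real.exp (G y) := by
    have hexp := (Real.tendsto_exp_atTop.comp htend).eventually_ge_atTop 1
    filter_upwards [hexp, self_mem_nhdsWithin] with y h1 (hy : 0 < y)
    rw [Function.comp, Real.exp_add, Real.exp_log hy] at h1
    exact h1
  obtain ⟨δ, hδ0, hδ⟩ := (nhdsGT_basis (0:ℝ)).eventually_iff.mp hev
  set δ₀ : ℝ := min δ 1 / 2 with hδ₀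
  have hδ₀pos : 0 < δ₀ := by positivity
  have hδ₀δ : δ₀ < δ := by
    have : min δ 1 ≤ δ := min_le_left _ _
    have : δ₀ ≤ δ / 2 := by rw [hδ₀]; linarith
    linarith
  have hδ₀1 : δ₀ ≤ 1 := by
    have : min δ 1 ≤ 1 := min_le_right _ _
    rw [hδ₀]; linarith
  -- continuity of F := exp ∘ G on (0, ∞)
  set F : ℝ → ℝ := fun y => Real.exp (G y) with hF
  have hFc : ContinuousOn F (Set.Ioi 0) := by
    intro y hy
    have hy0 : (y:ℝ) ≠ 0 := ne_of_gt hy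
    have h1 : ContinuousAt (fun y : ℝ => y ^ p) y := continuousAt_rpow_const _ _ (Or.inl hy0)
    have h2 : ContinuousAt (fun y : ℝ => y ^ q) y := continuousAt_rpow_const _ _ (Or.inl hy0)
    have hGc : ContinuousAt G y := by
      rw [hG]
      exact (((((h1.sub continuousAt_const).div_const p).const_mul A).sub
        (((h2.sub continuousAt_const).div_const q).const_mul B)).const_mul (-2))
    exact (Real.continuous_exp.continuousAt.comp hGc).continuousWithinAt
  have hint : ∀ a b : ℝ, 0 < a → 0 < b → IntervalIntegrable F volume a b := by
    intro a b ha hb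
    apply (hFc.mono _).intervalIntegrable
    intro z hz
    rcases Set.mem_uIcc.mp hz with ⟨h1, _⟩ | ⟨h1, _⟩ <;> [exact lt_of_lt_of_le ha h1;
      exact lt_of_lt_of_le hb h1]
  -- conclude
  apply tendsto_atBot_mono' _ _ (tendsto_atBot_add_const_right _ (-log δ₀)
    tendsto_log_nhdsGT_zero)
  filter_upwards [Ioo_mem_nhdsGT_of_mem (Set.left_mem_Ico.mpr hδ₀pos)] with x hx
  obtain ⟨hx0, hxδ⟩ := hx
  have hx1 : x < 1 := lt_of_lt_of_le hxδ hδ₀1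
  -- rewrite the integral using F
  have hcongr : (∫ y in (1:ℝ)..x, Real.exp (-2 * ∫ z in (1:ℝ)..y, κ*(μ-z)/(θ^2 * z ^ (2*γ))))
      = ∫ y in (1:ℝ)..x, F y := by
    apply integral_congr
    intro y hy
    have hy0 : 0 < y := by
      rcases Set.mem_uIcc.mp hy with ⟨h1, _⟩ | ⟨h1, _⟩ <;> linarith
    simp only
    rw [hI y hy0, hF, hG]
  rw [hcongr, integral_symm]
  have i1 : IntervalIntegrable F volume x δ₀ := hint _ _ hx0 hδ₀pos
  have i2 : IntervalIntegrable F volume δ₀ 1 := hint _ _ hδ₀pos one_pos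
  have iinv : IntervalIntegrable (fun y : ℝ => y⁻¹) volume x δ₀ := by
    apply intervalIntegrable_inv
    · intro z hz
      rcases Set.mem_uIcc.mp hz with ⟨h1, _⟩ | ⟨h1, _⟩ <;> [exact ne_of_gt (lt_of_lt_of_le hx0 h1);
        exact ne_of_gt (lt_of_lt_of_le hδ₀pos h1)]
    · exact continuousOn_id
  have hmono : (∫ y in x..δ₀, y⁻¹) ≤ ∫ y in x..δ₀, F y := by
    apply integral_mono_on hxδ.le iinv i1
    intro y hy
    have hy0 : 0 < y := lt_of_lt_of_le hx0 hy.1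
    have hbound := hδ ⟨hy0, lt_of_le_of_lt hy.2 hδ₀δ⟩
    rw [inv_eq_one_div, div_le_iff₀ hy0]
    rw [mul_comm] at hbound
    exact hbound
  have h0uIcc : (0:ℝ) ∉ Set.uIcc x δ₀ := by
    rw [Set.mem_uIcc]; push_neg; constructor <;> intro h <;> linarith
  have hinvval : (∫ y in x..δ₀, y⁻¹) = log δ₀ - log x := by
    rw [integral_inv h0uIcc, Real.log_div (ne_of_gt hδ₀pos) (ne_of_gt hx0)]
  have hsplit : (∫ y in x..(1:ℝ), F y) = (∫ y in x..δ₀, F y) + ∫ y in δ₀..(1:ℝ), F y :=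
    (integral_add_adjacent_intervals i1 i2).symm
  have hpos : 0 ≤ ∫ y in δ₀..(1:ℝ), F y :=
    integral_nonneg hδ₀1 (fun y _ => (Real.exp_pos _).le)
  have : log δ₀ - log x ≤ ∫ y in x..(1:ℝ), F y := by
    rw [hsplit]; rw [hinvval] at hmono; linarith
  linarith [this]
end

section
/- Drift comparison for the truncated CEV drift: for γ ∈ (1/2,1), κ, μ, θ > 0, and all sufficiently small ε > 0, the inequality κμ·Φ_ε(x) − (γθ²/2)·Ψ_ε(x) ≤ κμ·x^{−γ/(1−γ)} − (γθ²)/(2x) holds for all x > 0. -/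
open Real

noncomputable def Phi (γ ε x : ℝ) : ℝ :=
  if ε ≤ x then x ^ (-(γ/(1-γ)))
  else -(γ/(1-γ)) * ε ^ (-(1/(1-γ))) * x + (1/(1-γ)) * ε ^ (-(γ/(1-γ)))

noncomputable def Psi (ε x : ℝ) : ℝ :=
  if ε ≤ x then 1/x else -x/ε^2 + 2/ε

lemma key_ineq (p t : ℝ) (hp : 1 ≤ p) (ht0 : 0 < t) (ht1 : t ≤ 1) :
    1/t + t - 2 ≤ t ^ (-p) + p * t - (p + 1) := by
  have hlog : Real.log t ≤ t - 1 := Real.log_le_sub_one_of_pos ht0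
  have h1 : 1 + (p - 1) * (1 - t) ≤ t ^ (-(p-1)) := by
    have he : t ^ (-(p-1)) = Real.exp (-(p-1) * Real.log t) := by
      rw [Real.rpow_def_of_pos ht0]; ring_nf
    have h2 : (-(p-1) * Real.log t) + 1 ≤ Real.exp (-(p-1) * Real.log t) :=
      Real.add_one_le_exp _
    rw [he]
    nlinarith [mul_le_mul_of_nonneg_left hlog (by linarith : (0:ℝ) ≤ p - 1)]
  have h2 : t ^ (-p) = t ^ (-(p-1)) * t⁻¹ := by
    rw [← Real.rpow_neg_one t, ← Real.rpow_add ht0]; ring_nf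
  have h3 : 1 ≤ t⁻¹ := by
    have h6 : t * t⁻¹ = 1 := mul_inv_cancel₀ (ne_of_gt ht0)
    nlinarith [inv_pos.mpr ht0]
  have h4 : 1 ≤ t ^ (-(p-1)) := by nlinarith
  rw [h2]
  have h5 : 0 ≤ (t ^ (-(p-1)) - 1) * (t⁻¹ - 1) := by nlinarith
  have h6 : t * t⁻¹ = 1 := mul_inv_cancel₀ (ne_of_gt ht0)
  have h7 : 1/t = t⁻¹ := one_div t
  nlinarith

theorem stmt_9 (γ κ μ θ : ℝ) (hγ : 1/2 < γ) (hγ1 : γ < 1)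
    (hκ : 0 < κ) (hμ : 0 < μ) (hθ : 0 < θ) :
    ∃ ε₀ : ℝ, 0 < ε₀ ∧ ∀ ε : ℝ, 0 < ε → ε < ε₀ → ∀ x : ℝ, 0 < x →
      κ*μ*Phi γ ε x - (γ*θ^2/2)*Psi ε x ≤ κ*μ*x ^ (-(γ/(1-γ))) - γ*θ^2/(2*x) := by
  have h1γ : 0 < 1 - γ := by linarith
  set p := γ/(1-γ) with hpdef
  have hp : 1 < p := by
    rw [hpdef, lt_div_iff₀ h1γ]; linarith
  have hq : 1/(1-γ) = p + 1 := by
    rw [hpdef]; field_simp; ring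
  set R := 2*κ*μ/(γ*θ^2) with hRdef
  have hγ0 : 0 < γ := by linarith
  have hR0 : 0 < R := by positivity
  refine ⟨min 1 (R ^ (p-1)⁻¹), lt_min one_pos (Real.rpow_pos_of_pos hR0 _), ?_⟩
  intro ε hε hεlt x hx
  have hε1 : ε < 1 := lt_of_lt_of_le hεlt (min_le_left _ _)
  have hεR : ε ^ (p-1) < R := by
    have h := Real.rpow_lt_rpow hε.le (lt_of_lt_of_le hεlt (min_le_right _ _))
      (by linarith : (0:ℝ) < p - 1)
    rwa [← Real.rpow_mul hR0.le, inv_mul_cancel₀ (by linarith : p - 1 ≠ 0),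
      Real.rpow_one] at h
  by_cases hxε : ε ≤ x
  · simp only [Phi, Psi, if_pos hxε]
    apply le_of_eq
    ring
  · push_neg at hxε
    simp only [Phi, Psi, if_neg (not_le.mpr hxε)]
    rw [hq, ← hpdef]
    set t := x/ε with htdef
    have ht0 : 0 < t := div_pos hx hε
    have ht1 : t ≤ 1 := by
      rw [htdef, div_le_one hε]; exact hxε.le
    have hkey := key_ineq p t hp.le ht0 ht1
    have hxt : x = t * ε := by
      rw [htdef, div_mul_cancel₀ _ (ne_of_gt hε)]
    have hxp : x ^ (-p) = t ^ (-p) * ε ^ (-p) := by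
      rw [hxt, Real.mul_rpow ht0.le hε.le]
    have hεp : ε ^ (-(p+1)) = ε ^ (-p) * ε⁻¹ := by
      rw [← Real.rpow_neg_one ε, ← Real.rpow_add hε]; ring_nf
    have hB : 0 ≤ 1/t + t - 2 := by
      have h6 : t * t⁻¹ = 1 := mul_inv_cancel₀ (ne_of_gt ht0)
      have h7 : 1/t = t⁻¹ := one_div t
      nlinarith [sq_nonneg (t - 1), mul_pos ht0 ht0]
    have hA : 0 ≤ t ^ (-p) + p * t - (p + 1) := hB.trans hkey
    have hεp2 : ε ^ (-p) = (ε ^ (p-1))⁻¹ * ε⁻¹ := by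
      rw [← Real.rpow_neg hε.le, ← Real.rpow_neg_one ε, ← Real.rpow_add hε]
      ring_nf
    have hεpow : 0 < ε ^ (p-1) := Real.rpow_pos_of_pos hε _
    have hcoef : γ*θ^2/2 * ε⁻¹ ≤ κ*μ*ε ^ (-p) := by
      rw [hεp2]
      have h1 : γ*θ^2/2 ≤ κ*μ*(ε ^ (p-1))⁻¹ := by
        have h3 : γ*θ^2/2 * R = κ*μ := by
          rw [hRdef]; field_simp
        have h2 : γ*θ^2/2 * ε ^ (p-1) ≤ κ*μ := by
          have h5 := mul_lt_mul_of_pos_left hεR (show (0:ℝ) < γ*θ^2/2 by positivity)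
          linarith
        have h4 : κ*μ*(ε ^ (p-1))⁻¹ = κ*μ/(ε ^ (p-1)) := by ring
        rw [h4, le_div_iff₀ hεpow]; exact h2
      calc γ*θ^2/2 * ε⁻¹ ≤ κ*μ*(ε ^ (p-1))⁻¹ * ε⁻¹ :=
            mul_le_mul_of_nonneg_right h1 (by positivity)
        _ = κ*μ*((ε ^ (p-1))⁻¹ * ε⁻¹) := by ring
    have hmain : γ*θ^2/2 * ε⁻¹ * (1/t + t - 2) ≤
        κ*μ*ε ^ (-p) * (t ^ (-p) + p * t - (p + 1)) :=
      calc γ*θ^2/2 * ε⁻¹ * (1/t + t - 2) ≤ κ*μ*ε ^ (-p) * (1/t + t - 2) :=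
            mul_le_mul_of_nonneg_right hcoef hB
        _ ≤ κ*μ*ε ^ (-p) * (t ^ (-p) + p * t - (p + 1)) := by
            apply mul_le_mul_of_nonneg_left hkey
            positivity
    have hεne : ε ≠ 0 := ne_of_gt hε
    have hxne : x ≠ 0 := ne_of_gt hx
    have e1 : γ*θ^2/2 * ε⁻¹ * (1/t + t - 2) =
        γ*θ^2/(2*x) - γ*θ^2/2 * (-x/ε^2 + 2/ε) := by
      rw [htdef]; field_simp; ring
    have e2 : κ*μ*ε ^ (-p) * (t ^ (-p) + p * t - (p + 1)) =
        κ*μ*x ^ (-p) - κ*μ*(-p * ε ^ (-(p+1)) * x + (p+1) * ε ^ (-p)) := by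
      rw [hxp, hεp, htdef]; field_simp; ring
    linarith [hmain]
end

section
/- Uniform upper bound on the derivative of the truncated drift: for γ ∈ (1/2,1), κ, μ, θ > 0, there exists ε₀ > 0 such that for all 0 < ε < ε₀ and all x > 0, κμ·Φ_ε'(x) − (γθ²/2)·Ψ_ε'(x) ≤ ξ, where ξ = ((κμ)/(θ²(1−γ)²))^{−1/(2γ−1)} · (κμγ(2γ−1))/(2(1−γ)²), a constant independent of ε. -/
open Real

noncomputable def Phi' (γ ε x : ℝ) : ℝ :=
  if ε ≤ x then -(γ/(1-γ)) * x ^ (-(1/(1-γ))) else -(γ/(1-γ)) * ε ^ (-(1/(1-γ)))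

noncomputable def Psi' (ε x : ℝ) : ℝ :=
  if ε ≤ x then -(x^2)⁻¹ else -(ε^2)⁻¹

theorem stmt_11 (γ κ μ θ : ℝ) (hγ : 1/2 < γ) (hγ1 : γ < 1)
    (hκ : 0 < κ) (hμ : 0 < μ) (hθ : 0 < θ) :
    ∃ ε₀ : ℝ, 0 < ε₀ ∧ ∀ ε : ℝ, 0 < ε → ε < ε₀ → ∀ x : ℝ, 0 < x →
      κ*μ*Phi' γ ε x - (γ*θ^2/2)*Psi' ε x ≤
        ((κ*μ)/(θ^2*(1-γ)^2)) ^ (-(1/(2*γ-1))) * (κ*μ*γ*(2*γ-1))/(2*(1-γ)^2) := by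
  have h1γ : (0:ℝ) < 1 - γ := by linarith
  have h2γ : (0:ℝ) < 2*γ - 1 := by linarith
  have h1γ' : (1:ℝ) - γ ≠ 0 := ne_of_gt h1γ
  have hθ' : θ ≠ 0 := ne_of_gt hθ
  have hκ' : κ ≠ 0 := ne_of_gt hκ
  have hμ' : μ ≠ 0 := ne_of_gt hμ
  have hγ0 : (0:ℝ) < γ := by linarith
  set C : ℝ := (κ*μ)/(θ^2*(1-γ)^2) with hC
  have hCpos : 0 < C := by
    apply div_pos (mul_pos hκ hμ)
    positivity
  set ξ : ℝ := C ^ (-(1/(2*γ-1))) * (κ*μ*γ*(2*γ-1))/(2*(1-γ)^2) with hξ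
  set A : ℝ := κ*μ*γ/(2*(1-γ)^2) with hA
  have hApos : 0 < A := by rw [hA]; positivity
  set B : ℝ := A * C ^ (-(1/(2*γ-1))) with hB
  have hBpos : 0 < B := by
    apply mul_pos hApos (Real.rpow_pos_of_pos hCpos _)
  have hξB : ξ = (2*γ-1) * B := by
    rw [hξ, hB, hA]; field_simp
  -- key algebraic identity
  have e1 : (C ^ (-(1/(2*γ-1)))) ^ ((2*γ-1):ℝ) = C⁻¹ := by
    rw [← Real.rpow_mul hCpos.le]
    rw [show -(1/(2*γ-1)) * (2*γ-1) = (-1:ℝ) by field_simp]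
    exact Real.rpow_neg_one C
  have e2 : B ^ ((2*γ-1):ℝ) = A ^ ((2*γ-1):ℝ) * C⁻¹ := by
    rw [hB, Real.mul_rpow hApos.le (Real.rpow_nonneg hCpos.le _), e1]
  have e3 : A ^ (2*(1-γ)) * A ^ ((2*γ-1):ℝ) = A := by
    rw [← Real.rpow_add hApos,
      show 2*(1-γ) + (2*γ-1) = (1:ℝ) by ring, Real.rpow_one]
  have hb : A ^ (2*(1-γ)) * B ^ ((2*γ-1):ℝ) = γ*θ^2/2 := by
    rw [e2, ← mul_assoc, e3, hA, hC]
    field_simp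
  -- the key inequality via weighted AM-GM
  have key : ∀ t : ℝ, 0 < t →
      (γ*θ^2/2) * t^2 - κ*μ*(γ/(1-γ)) * t ^ (1/(1-γ)) ≤ ξ := by
    intro t ht
    have hgm := Real.geom_mean_le_arith_mean2_weighted
      (by linarith : (0:ℝ) ≤ 2*(1-γ)) (by linarith : (0:ℝ) ≤ 2*γ-1)
      (by positivity : (0:ℝ) ≤ A * t ^ (1/(1-γ))) hBpos.le
      (by ring : 2*(1-γ) + (2*γ-1) = 1)
    have h4 : (t ^ (1/(1-γ))) ^ (2*(1-γ)) = t ^ 2 := by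
      rw [← Real.rpow_mul ht.le,
        show (1/(1-γ))*(2*(1-γ)) = (2:ℝ) by field_simp,
        show (2:ℝ) = ((2:ℕ):ℝ) by norm_num, Real.rpow_natCast]
    have lhs_eq : (A * t ^ (1/(1-γ))) ^ (2*(1-γ)) * B ^ ((2*γ-1):ℝ)
        = (γ*θ^2/2) * t^2 := by
      rw [Real.mul_rpow hApos.le (Real.rpow_nonneg ht.le _), h4]
      linear_combination (t^2) * hb
    have rhs_eq : 2*(1-γ)*(A * t ^ (1/(1-γ))) + (2*γ-1)*B
        = κ*μ*(γ/(1-γ)) * t ^ (1/(1-γ)) + ξ := by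
      rw [hξB, hA]
      field_simp
    linarith [hgm, lhs_eq.symm.le, rhs_eq.le]
  have helper : ∀ y : ℝ, 0 < y →
      κ*μ*(-(γ/(1-γ)) * y ^ (-(1/(1-γ)))) - (γ*θ^2/2)*(-(y^2)⁻¹) ≤ ξ := by
    intro y hy
    have h1 : y ^ (-(1/(1-γ))) = (y⁻¹) ^ (1/(1-γ)) := by
      rw [Real.rpow_neg hy.le, ← Real.inv_rpow hy.le]
    have h2 : (y^2)⁻¹ = (y⁻¹)^2 := (inv_pow y 2).symm
    rw [h1, h2]
    have := key y⁻¹ (by positivity)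
    nlinarith [this]
  refine ⟨1, one_pos, fun ε hε _ x hx => ?_⟩
  unfold Phi' Psi'
  split_ifs with h
  · exact helper x hx
  · exact helper ε hε
end
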